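/- arXiv:2502.10020 — 2 statements merged into one kernel-verified Lean document; each statement's English description precedes it below -/
import Mathlib

section
/- Let d, T ∈ ℕ, λ̃ ≥ 2, κ ∈ (0,1], and let x_1, …, x_T ∈ ℝ^d with ‖x_t‖₂ ≤ 1 and scalars q_1, …, q_T with κ ≤ q_t ≤ 1 for all t. Let (τ_t)_{t∈[T]} be a nondecreasing sequence of positive reals. Define matrices by H̃_1 = λ̃ I_d and, for t ∈ [T], H̃_{t+1} = H̃_t + q_t x_t x_tᵀ if t ∈ 𝒲 and H̃_{t+1} = H̃_t otherwise, where 𝒲 = { t ∈ [T] : x_tᵀ H̃_t^{-1} x_t ≥ 1/τ_t² }. Then |𝒲| ≤ (2/κ) τ_T² d log(1 + T/(dλ̃)). -/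
/-!
Every round contributes `log (1 + c_t x_tᵀ H̃_t⁻¹ x_t)` to `log det H̃_{T+1} - log det H̃_1`, by the
matrix determinant lemma, with `c_t = q_t` on warm-up rounds and `c_t = 0` otherwise. Since
`H̃_t ⪰ λ̃ I`, the argument of the logarithm is at most `1 + 1/λ̃ ≤ 3/2`, where `log (1 + u) ≥ u/2`;
on a warm-up round it is at least `1 + κ/τ_T²`, so each warm-up round contributes at least
`κ/(2τ_T²)`. On the other hand the trace of `H̃_{T+1}` is at most `dλ̃ + T`, and concavity of `log` on the
eigenvalues bounds the total by `d log (1 + T/(dλ̃))`.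
-/

open Matrix
open scoped Classical

/-- Euclidean (ℓ₂) norm on `Fin d → ℝ`. -/
noncomputable def l2norm {d : ℕ} (v : Fin d → ℝ) : ℝ := Real.sqrt (v ⬝ᵥ v)

theorem Real.half_le_log_one_add {u : ℝ} (h0 : 0 ≤ u) (h1 : u ≤ 1) : u / 2 ≤ Real.log (1 + u) := by
  have hlog := Real.one_sub_inv_le_log_of_pos (by linarith : 0 < 1 + u)
  have hu : 1 - (1 + u)⁻¹ = u / (1 + u) := by field_simp; ring
  have hhalf : u / 2 ≤ u / (1 + u) := div_le_div_of_nonneg_left h0 (by linarith) (by linarith)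
  linarith

theorem div_le_log_one_add_mul_of_threshold {κ q s τ τ' : ℝ} (hκ : 0 < κ) (hκq : κ ≤ q)
    (hτ : 0 < τ) (hττ' : τ ≤ τ') (hs : 1 / τ ^ 2 ≤ s) (hqs : q * s ≤ 1) :
    κ / (2 * τ' ^ 2) ≤ Real.log (1 + q * s) := by
  have hs0 : 0 ≤ s := le_trans (by positivity) hs
  have hq0 : 0 ≤ q := hκ.le.trans hκq
  calc κ / (2 * τ' ^ 2) ≤ κ * (1 / τ ^ 2) / 2 := by
        rw [mul_one_div, div_div, mul_comm (τ ^ 2)]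
        gcongr
    _ ≤ q * s / 2 := by gcongr
    _ ≤ Real.log (1 + q * s) := Real.half_le_log_one_add (by positivity) hqs

namespace Matrix

variable {n : Type*} [Fintype n] [DecidableEq n]

theorem det_add_vecMulVec {α : Type*} [CommRing α] {A : Matrix n n α} (hA : IsUnit A.det)
    (u v : n → α) : (A + vecMulVec u v).det = A.det * (1 + v ⬝ᵥ A⁻¹ *ᵥ u) := by
  rw [vecMulVec_eq Unit, det_add_replicateCol_mul_replicateRow hA, det_unique (n := Unit)]
  simp [Matrix.mul_apply, dotProduct, mulVec, Finset.mul_sum, Finset.sum_mul, mul_assoc]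
  rw [Finset.sum_comm]

theorem PosDef.log_det_add_smul_vecMulVec {A : Matrix n n ℝ} (hA : A.PosDef) {c : ℝ}
    (hc : 0 ≤ c) (v : n → ℝ) :
    Real.log (A + c • vecMulVec v v).det =
      Real.log A.det + Real.log (1 + c * (v ⬝ᵥ A⁻¹ *ᵥ v)) := by
  have hv : 0 ≤ v ⬝ᵥ A⁻¹ *ᵥ v := by simpa using hA.inv.posSemidef.dotProduct_mulVec_nonneg v
  rw [← smul_vecMulVec, det_add_vecMulVec hA.det_pos.ne'.isUnit, mulVec_smul, dotProduct_smul,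
    smul_eq_mul, Real.log_mul hA.det_pos.ne' (by positivity)]

theorem dotProduct_inv_mulVec_le_div {A : Matrix n n ℝ} {c : ℝ} (hc : 0 < c)
    (hA : (A - c • 1).PosSemidef) (v : n → ℝ) : v ⬝ᵥ A⁻¹ *ᵥ v ≤ (v ⬝ᵥ v) / c := by
  have hApd : A.PosDef := by simpa using (PosDef.one.smul hc).add_posSemidef hA
  set y := A⁻¹ *ᵥ v
  have hAy : A *ᵥ y = v := by
    simp [y, mulVec_mulVec, mul_nonsing_inv _ hApd.det_pos.ne'.isUnit]
  have hquad : 0 ≤ v ⬝ᵥ y - c * (y ⬝ᵥ y) := by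
    simpa [sub_mulVec, hAy, dotProduct_sub, smul_mulVec, dotProduct_comm y v] using
      hA.dotProduct_mulVec_nonneg y
  have hsq : 0 ≤ (v - c • y) ⬝ᵥ (v - c • y) := by
    simpa using dotProduct_self_star_nonneg (v - c • y)
  simp only [sub_dotProduct, dotProduct_sub, smul_dotProduct, dotProduct_smul, smul_eq_mul,
    dotProduct_comm y v] at hsq
  -- `v ⬝ᵥ v - c (v ⬝ᵥ y) = ‖v - c y‖² + c (v ⬝ᵥ y - c ‖y‖²)`
  rw [le_div_iff₀ hc]
  nlinarith

theorem PosDef.log_det_le_mul_log_trace_div_card {A : Matrix n n ℝ} (hA : A.PosDef) :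
    Real.log A.det ≤ Fintype.card n * Real.log (A.trace / Fintype.card n) := by
  rcases isEmpty_or_nonempty n with hn | hn
  · simp
  have hd : (0 : ℝ) < Fintype.card n := by exact_mod_cast Fintype.card_pos
  have hJensen := strictConcaveOn_log_Ioi.concaveOn.le_map_sum (t := Finset.univ)
    (w := fun _ => (Fintype.card n : ℝ)⁻¹) (p := hA.isHermitian.eigenvalues)
    (fun _ _ => by positivity) (by simp [Finset.card_univ]) (fun i _ => hA.eigenvalues_pos i)
  simp only [smul_eq_mul, ← Finset.mul_sum] at hJensen
  rw [inv_mul_le_iff₀ hd] at hJensen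
  rw [hA.isHermitian.det_eq_prod_eigenvalues, hA.isHermitian.trace_eq_sum_eigenvalues]
  simp only [RCLike.ofReal_real_eq_id, id]
  rw [Real.log_prod (fun i _ => (hA.eigenvalues_pos i).ne'), div_eq_inv_mul]
  linarith

end Matrix

section RankOneUpdates

variable {n : Type*} [Fintype n] [DecidableEq n] {T : ℕ} {lam : ℝ} {x : ℕ → n → ℝ} {c : ℕ → ℝ}
  {H : ℕ → Matrix n n ℝ}

theorem posSemidef_sub_smul_one_of_rankOne_updates (hH1 : H 1 = lam • 1)
    (hH : ∀ t ∈ Finset.Icc 1 T, H (t + 1) = H t + c t • vecMulVec (x t) (x t))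
    (hc : ∀ t ∈ Finset.Icc 1 T, 0 ≤ c t) :
    ∀ t ∈ Finset.Icc 1 (T + 1), (H t - lam • 1).PosSemidef := by
  intro t ht
  obtain ⟨ht1, htT⟩ := Finset.mem_Icc.mp ht
  induction t, ht1 using Nat.le_induction with
  | base => simpa [hH1] using PosSemidef.zero
  | succ t ht1 ih =>
    have ht : t ∈ Finset.Icc 1 T := Finset.mem_Icc.mpr ⟨ht1, by omega⟩
    rw [hH t ht, add_sub_right_comm]
    exact (ih (Finset.mem_Icc.mpr ⟨ht1, by omega⟩) (by omega)).add
      ((posSemidef_vecMulVec_self_star (x t)).smul (hc t ht))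

theorem dotProduct_inv_mulVec_le_of_rankOne_updates (hlam : 0 < lam) (hH1 : H 1 = lam • 1)
    (hH : ∀ t ∈ Finset.Icc 1 T, H (t + 1) = H t + c t • vecMulVec (x t) (x t))
    (hx : ∀ t ∈ Finset.Icc 1 T, x t ⬝ᵥ x t ≤ 1) (hc : ∀ t ∈ Finset.Icc 1 T, 0 ≤ c t) :
    ∀ t ∈ Finset.Icc 1 T, x t ⬝ᵥ (H t)⁻¹ *ᵥ x t ≤ lam⁻¹ := fun t ht =>
  calc _ ≤ (x t ⬝ᵥ x t) / lam := dotProduct_inv_mulVec_le_div hlam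
          (posSemidef_sub_smul_one_of_rankOne_updates hH1 hH hc t
            (Finset.Icc_subset_Icc_right (by omega) ht)) (x t)
    _ ≤ lam⁻¹ := by rw [div_eq_mul_inv]; exact mul_le_of_le_one_left (by positivity) (hx t ht)

theorem trace_le_of_rankOne_updates (hH1 : H 1 = lam • 1)
    (hH : ∀ t ∈ Finset.Icc 1 T, H (t + 1) = H t + c t • vecMulVec (x t) (x t))
    (hx : ∀ t ∈ Finset.Icc 1 T, x t ⬝ᵥ x t ≤ 1) (hc : ∀ t ∈ Finset.Icc 1 T, c t ≤ 1) :
    (H (T + 1)).trace ≤ Fintype.card n * lam + T := by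
  induction T with
  | zero => simp [hH1, mul_comm]
  | succ T ih =>
    have hT : T + 1 ∈ Finset.Icc 1 (T + 1) := by simp
    have hxx : 0 ≤ x (T + 1) ⬝ᵥ x (T + 1) := by
      simpa using dotProduct_self_star_nonneg (x (T + 1))
    have hprev := ih (fun t ht => hH t (Finset.Icc_subset_Icc_right (by omega) ht))
      (fun t ht => hx t (Finset.Icc_subset_Icc_right (by omega) ht))
      (fun t ht => hc t (Finset.Icc_subset_Icc_right (by omega) ht))
    rw [hH _ hT, trace_add, trace_smul, trace_vecMulVec, smul_eq_mul]
    push_cast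
    nlinarith [hx _ hT, hc _ hT]

theorem sum_log_one_add_le_of_rankOne_updates (hlam : 0 < lam) (hH1 : H 1 = lam • 1)
    (hH : ∀ t ∈ Finset.Icc 1 T, H (t + 1) = H t + c t • vecMulVec (x t) (x t))
    (hx : ∀ t ∈ Finset.Icc 1 T, x t ⬝ᵥ x t ≤ 1) (hc : ∀ t ∈ Finset.Icc 1 T, 0 ≤ c t ∧ c t ≤ 1) :
    ∑ t ∈ Finset.Icc 1 T, Real.log (1 + c t * (x t ⬝ᵥ (H t)⁻¹ *ᵥ x t)) ≤
      Fintype.card n * Real.log (1 + T / (Fintype.card n * lam)) := by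
  rcases isEmpty_or_nonempty n with hn | hn
  · simp
  have hd : (0 : ℝ) < Fintype.card n := by exact_mod_cast Fintype.card_pos
  have hpd : ∀ t ∈ Finset.Icc 1 (T + 1), (H t).PosDef := fun t ht => by
    simpa using (PosDef.one.smul hlam).add_posSemidef
      (posSemidef_sub_smul_one_of_rankOne_updates hH1 hH (fun t ht => (hc t ht).1) t ht)
  have htelescope : ∑ t ∈ Finset.Icc 1 T, Real.log (1 + c t * (x t ⬝ᵥ (H t)⁻¹ *ᵥ x t)) =
      Real.log (H (T + 1)).det - Real.log (H 1).det := by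
    rw [← Finset.Ico_add_one_right_eq_Icc,
      ← Finset.sum_Ico_sub (fun t => Real.log (H t).det) (by omega : 1 ≤ T + 1)]
    refine Finset.sum_congr rfl fun t ht => ?_
    rw [Finset.Ico_add_one_right_eq_Icc] at ht
    rw [hH t ht, (hpd t (Finset.Icc_subset_Icc_right (by omega) ht)).log_det_add_smul_vecMulVec
      (hc t ht).1]
    ring
  have htrace := trace_le_of_rankOne_updates hH1 hH hx (fun t ht => (hc t ht).2)
  have htrace_pos : 0 < (H (T + 1)).trace := (hpd _ (by simp)).trace_pos
  calc _ = Real.log (H (T + 1)).det - Real.log (H 1).det := htelescope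
    _ ≤ Fintype.card n * Real.log ((H (T + 1)).trace / Fintype.card n) -
        Fintype.card n * Real.log lam := by
      gcongr
      · exact (hpd _ (by simp)).log_det_le_mul_log_trace_div_card
      · simp [hH1, Real.log_pow]
    _ ≤ Fintype.card n * Real.log ((Fintype.card n * lam + T) / Fintype.card n) -
        Fintype.card n * Real.log lam := by gcongr
    _ = Fintype.card n * Real.log (1 + T / (Fintype.card n * lam)) := by
      rw [← mul_sub, ← Real.log_div (by positivity) hlam.ne']
      congr 2
      field_simp

end RankOneUpdates

theorem warmup_round_count_bound_general {d : ℕ} (T : ℕ) (lamt κ : ℝ)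
    (hlamt : 2 ≤ lamt) (hκ0 : 0 < κ)
    (x : ℕ → Fin d → ℝ) (hx : ∀ t ∈ Finset.Icc 1 T, l2norm (x t) ≤ 1)
    (q : ℕ → ℝ) (hq : ∀ t ∈ Finset.Icc 1 T, κ ≤ q t ∧ q t ≤ 1)
    (τ : ℕ → ℝ) (hτpos : ∀ t, 0 < τ t) (hτmono : Monotone τ)
    (Htil : ℕ → Matrix (Fin d) (Fin d) ℝ)
    (hH1 : Htil 1 = lamt • (1 : Matrix (Fin d) (Fin d) ℝ))
    (hHrec : ∀ t ∈ Finset.Icc 1 T,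
      Htil (t + 1) =
        if 1 / (τ t) ^ 2 ≤ x t ⬝ᵥ (Htil t)⁻¹.mulVec (x t)
        then Htil t + q t • vecMulVec (x t) (x t)
        else Htil t) :
    (((Finset.Icc 1 T).filter
        (fun t => 1 / (τ t) ^ 2 ≤ x t ⬝ᵥ (Htil t)⁻¹.mulVec (x t))).card : ℝ)
      ≤ (2 / κ) * (τ T) ^ 2 * d * Real.log (1 + T / (d * lamt)) := by
  let c : ℕ → ℝ := fun t => if 1 / τ t ^ 2 ≤ x t ⬝ᵥ (Htil t)⁻¹ *ᵥ x t then q t else 0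
  have hxx : ∀ t ∈ Finset.Icc 1 T, x t ⬝ᵥ x t ≤ 1 := fun t ht => Real.sqrt_le_one.mp (hx t ht)
  have hc : ∀ t ∈ Finset.Icc 1 T, 0 ≤ c t ∧ c t ≤ 1 := fun t ht => by
    have := hq t ht
    dsimp only [c]
    split_ifs <;> constructor <;> linarith
  have hH : ∀ t ∈ Finset.Icc 1 T, Htil (t + 1) = Htil t + c t • vecMulVec (x t) (x t) :=
    fun t ht => by simp only [hHrec t ht, c, ite_smul, zero_smul, add_ite, add_zero]
  have hs := dotProduct_inv_mulVec_le_of_rankOne_updates (by linarith) hH1 hH hxx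
    (fun t ht => (hc t ht).1)
  have hround : ∀ t ∈ (Finset.Icc 1 T).filter
      (fun t => 1 / τ t ^ 2 ≤ x t ⬝ᵥ (Htil t)⁻¹ *ᵥ x t),
      κ / (2 * τ T ^ 2) ≤ Real.log (1 + c t * (x t ⬝ᵥ (Htil t)⁻¹ *ᵥ x t)) := by
    intro t ht
    obtain ⟨htT, hwarm⟩ := Finset.mem_filter.mp ht
    have hlam_inv : lamt⁻¹ ≤ 1 := inv_le_one_of_one_le₀ (by linarith)
    simp only [c, if_pos hwarm]
    exact div_le_log_one_add_mul_of_threshold hκ0 (hq t htT).1 (hτpos t)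
      (hτmono (Finset.mem_Icc.mp htT).2) hwarm (by nlinarith [hq t htT, hs t htT])
  have hpot := sum_log_one_add_le_of_rankOne_updates (by linarith) hH1 hH hxx hc
  rw [Fintype.card_fin, ← Finset.sum_filter_of_ne
    (p := fun t => 1 / τ t ^ 2 ≤ x t ⬝ᵥ (Htil t)⁻¹ *ᵥ x t) fun t _ h => by_contra fun hcold =>
    h (by simp only [c, if_neg hcold, zero_mul, add_zero, Real.log_one])] at hpot
  have hcount := (Finset.card_nsmul_le_sum _ _ _ hround).trans hpot
  have hrate : 0 < κ / (2 * τ T ^ 2) := by have := hτpos T; positivity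
  rw [nsmul_eq_mul, ← le_div_iff₀ hrate] at hcount
  exact hcount.trans_eq (by field_simp)

/-- **Lemma D.7, bound on the number of warm-up rounds.**
With `H̃₁ = λ̃ I` and `H̃_{t+1} = H̃_t + q_t x_t x_tᵀ` exactly on the rounds
`t ∈ 𝒲 = {t ∈ [T] : x_tᵀ H̃_t⁻¹ x_t ≥ 1/τ_t²}` (and `H̃_{t+1} = H̃_t`
otherwise), if `λ̃ ≥ 2`, `κ ≤ q_t ≤ 1`, `‖x_t‖₂ ≤ 1` and `τ` is a
nondecreasing positive threshold sequence, then
`|𝒲| ≤ (2/κ) τ_T² d log(1 + T/(dλ̃))`. -/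
theorem warmup_round_count_bound {d : ℕ} (T : ℕ) (lamt κ : ℝ)
    (hlamt : 2 ≤ lamt) (hκ0 : 0 < κ) (hκ1 : κ ≤ 1)
    (x : ℕ → Fin d → ℝ) (hx : ∀ t ∈ Finset.Icc 1 T, l2norm (x t) ≤ 1)
    (q : ℕ → ℝ) (hq : ∀ t ∈ Finset.Icc 1 T, κ ≤ q t ∧ q t ≤ 1)
    (τ : ℕ → ℝ) (hτpos : ∀ t, 0 < τ t) (hτmono : Monotone τ)
    (Htil : ℕ → Matrix (Fin d) (Fin d) ℝ)
    (hH1 : Htil 1 = lamt • (1 : Matrix (Fin d) (Fin d) ℝ))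
    (hHrec : ∀ t ∈ Finset.Icc 1 T,
      Htil (t + 1) =
        if 1 / (τ t) ^ 2 ≤ x t ⬝ᵥ (Htil t)⁻¹.mulVec (x t)
        then Htil t + q t • vecMulVec (x t) (x t)
        else Htil t) :
    (((Finset.Icc 1 T).filter
        (fun t => 1 / (τ t) ^ 2 ≤ x t ⬝ᵥ (Htil t)⁻¹.mulVec (x t))).card : ℝ)
      ≤ (2 / κ) * (τ T) ^ 2 * d * Real.log (1 + T / (d * lamt)) :=
  warmup_round_count_bound_general T lamt κ hlamt hκ0 x hx q hq τ hτpos hτmono Htil hH1 hHrec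
end

section
/- Let K ≥ 1, let r ∈ [0,1]^K, and define Q̃ : ℝ^K → ℝ by Q̃(u) = Σ_{i=1}^K exp(u_i) r_i / (1 + Σ_{k=1}^K exp(u_k)), and write p_i(u) = exp(u_i)/(1 + Σ_{k=1}^K exp(u_k)). Then for all u, v ∈ ℝ^K: vᵀ ∇²Q̃(u) v ≤ 5 Σ_{i=1}^K p_i(u) v_i². -/
/-!
Along the line `s ↦ u + s v` the revenue is a quotient `N(s)/D(s)` of exponential sums, and the
quotient rule, after dividing every term by `D(0)`, writes its second derivative at `0` through
averages against the choice probabilities `pᵢ = pᵢ(u)`: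
`Σ pᵢrᵢvᵢ² - 2 (Σ pᵢrᵢvᵢ)(Σ pᵢvᵢ) - (Σ pᵢrᵢ)(Σ pᵢvᵢ²) + 2 (Σ pᵢrᵢ)(Σ pᵢvᵢ)²`.
Since `Σ pᵢ ≤ 1` and `rᵢ ∈ [0,1]`, Cauchy–Schwarz bounds `(Σ pᵢrᵢvᵢ)²` and `(Σ pᵢvᵢ)²` by
`A = Σ pᵢvᵢ²`; with AM–GM on the cross term the four terms contribute at most `A + 2A + 0 + 2A`.
-/

/-- Softmax probabilities: `pᵢ(u) = exp(uᵢ)/(1 + Σₖ exp(uₖ))`. -/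
noncomputable def softmaxP (K : ℕ) (u : Fin K → ℝ) (i : Fin K) : ℝ :=
  Real.exp (u i) / (1 + ∑ k, Real.exp (u k))

/-- Expected revenue of an assortment under the MNL model, as a function of
the item utilities `u`, with rewards `r`:
`Q̃(u) = Σᵢ exp(uᵢ) rᵢ / (1 + Σₖ exp(uₖ))`. -/
noncomputable def mnlRevenue (K : ℕ) (r : Fin K → ℝ) (u : Fin K → ℝ) : ℝ :=
  (∑ i, Real.exp (u i) * r i) / (1 + ∑ k, Real.exp (u k))

open Finset Real

variable {ι : Type*} [Fintype ι]

def mnlHessianForm (p r v : ι → ℝ) : ℝ :=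
  ∑ i, p i * r i * v i ^ 2 - 2 * (∑ i, p i * r i * v i) * ∑ i, p i * v i
    - (∑ i, p i * r i) * (∑ i, p i * v i ^ 2) + 2 * (∑ i, p i * r i) * (∑ i, p i * v i) ^ 2

lemma sq_sum_mul_mul_le {p : ι → ℝ} (hp : ∀ i, 0 ≤ p i) (c v : ι → ℝ) :
    (∑ i, p i * c i * v i) ^ 2 ≤ (∑ i, p i * c i ^ 2) * ∑ i, p i * v i ^ 2 :=
  sum_sq_le_sum_mul_sum_of_sq_le_mul _ (fun i _ => mul_nonneg (hp i) (sq_nonneg _))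
    (fun i _ => mul_nonneg (hp i) (sq_nonneg _)) fun i _ => le_of_eq (by ring)

lemma mnlHessianForm_le {p r : ι → ℝ} (hp : ∀ i, 0 ≤ p i) (hp₁ : ∑ i, p i ≤ 1)
    (hr : ∀ i, r i ∈ Set.Icc (0 : ℝ) 1) (v : ι → ℝ) :
    mnlHessianForm p r v ≤ 5 * ∑ i, p i * v i ^ 2 := by
  unfold mnlHessianForm
  set A := ∑ i, p i * v i ^ 2
  set R := ∑ i, p i * r i
  set a := ∑ i, p i * r i * v i
  set b := ∑ i, p i * v i
  have hA : 0 ≤ A := sum_nonneg fun i _ => mul_nonneg (hp i) (sq_nonneg _)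
  have hrA : ∑ i, p i * r i * v i ^ 2 ≤ A := sum_le_sum fun i _ => by
    nlinarith [mul_nonneg (hp i) (sq_nonneg (v i)), (hr i).2]
  have hR₀ : 0 ≤ R := sum_nonneg fun i _ => mul_nonneg (hp i) (hr i).1
  have hR₁ : R ≤ 1 := (sum_le_sum fun i _ => mul_le_of_le_one_right (hp i) (hr i).2).trans hp₁
  have hr₂ : ∑ i, p i * r i ^ 2 ≤ 1 := (sum_le_sum fun i _ =>
    mul_le_of_le_one_right (hp i) (pow_le_one₀ (hr i).1 (hr i).2)).trans hp₁
  have ha : a ^ 2 ≤ A := by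
    simpa only [a] using (sq_sum_mul_mul_le hp r v).trans (mul_le_of_le_one_left hA hr₂)
  have hb : b ^ 2 ≤ A := by
    have := sq_sum_mul_mul_le hp (fun _ => 1) v
    simp only [mul_one, one_pow] at this
    exact this.trans (mul_le_of_le_one_left hA hp₁)
  -- `-2ab ≤ a² + b²` (AM–GM) and `(1 - R) b² ≥ 0`
  nlinarith [sq_nonneg (a + b), mul_nonneg (sub_nonneg.2 hR₁) (sq_nonneg b), mul_nonneg hR₀ hA]

lemma iteratedDeriv_two_div {N D N₁ D₁ : ℝ → ℝ} {N₂ D₂ x : ℝ}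
    (hN : ∀ s, HasDerivAt N (N₁ s) s) (hD : ∀ s, HasDerivAt D (D₁ s) s)
    (hN₁ : HasDerivAt N₁ N₂ x) (hD₁ : HasDerivAt D₁ D₂ x) (hD₀ : ∀ s, D s ≠ 0) :
    iteratedDeriv 2 (fun s => N s / D s) x =
      N₂ / D x - 2 * (N₁ x / D x) * (D₁ x / D x) - N x / D x * (D₂ / D x)
        + 2 * (N x / D x) * (D₁ x / D x) ^ 2 := by
  have hderiv : deriv (fun s => N s / D s) = fun s => (N₁ s * D s - N s * D₁ s) / D s ^ 2 :=
    funext fun s => ((hN s).div (hD s) (hD₀ s)).deriv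
  have hderiv₂ := ((hN₁.fun_mul (hD x)).fun_sub ((hN x).fun_mul hD₁)).fun_div ((hD x).fun_pow 2)
    (pow_ne_zero 2 (hD₀ x))
  rw [iteratedDeriv_succ, iteratedDeriv_one, hderiv, hderiv₂.deriv]
  field_simp [hD₀ x]
  ring

noncomputable def expSum (u v c : ι → ℝ) (s : ℝ) : ℝ :=
  ∑ i, exp (u i + s * v i) * c i

lemma hasDerivAt_expSum (u v c : ι → ℝ) (s : ℝ) :
    HasDerivAt (expSum u v c) (expSum u v (v * c) s) s := by
  have hline (i : ι) : HasDerivAt (fun t => u i + t * v i) (v i) s := by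
    simpa using (hasDerivAt_mul_const (v i)).const_add (u i)
  exact (HasDerivAt.fun_sum fun i _ => ((hline i).exp).mul_const (c i)).congr_deriv
    (sum_congr rfl fun i _ => by simp only [Pi.mul_apply]; ring)

lemma one_add_expSum_pos (u v : ι → ℝ) (s : ℝ) : 0 < 1 + expSum u v 1 s := by
  have : 0 ≤ expSum u v 1 s := sum_nonneg fun i _ => by simp [(exp_pos _).le]
  linarith

lemma mnlRevenue_add_smul (K : ℕ) (r u v : Fin K → ℝ) (s : ℝ) :
    mnlRevenue K r (u + s • v) = expSum u v r s / (1 + expSum u v 1 s) := by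
  simp [mnlRevenue, expSum]

lemma expSum_zero_div (K : ℕ) (u v c : Fin K → ℝ) :
    expSum u v c 0 / (1 + expSum u v 1 0) = ∑ i, softmaxP K u i * c i := by
  simp only [expSum, softmaxP, zero_mul, add_zero, Pi.one_apply, mul_one, sum_div]
  exact sum_congr rfl fun i _ => by ring

lemma softmaxP_nonneg (K : ℕ) (u : Fin K → ℝ) (i : Fin K) : 0 ≤ softmaxP K u i := by
  unfold softmaxP
  positivity

lemma sum_softmaxP_le_one (K : ℕ) (u : Fin K → ℝ) : ∑ i, softmaxP K u i ≤ 1 := by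
  simp only [softmaxP, ← sum_div]
  exact (div_le_one (by positivity)).2 (by linarith)

lemma iteratedDeriv_two_mnlRevenue (K : ℕ) (r u v : Fin K → ℝ) :
    iteratedDeriv 2 (fun s : ℝ => mnlRevenue K r (u + s • v)) 0 =
      mnlHessianForm (softmaxP K u) r v := by
  simp only [mnlRevenue_add_smul]
  rw [iteratedDeriv_two_div (hasDerivAt_expSum u v r)
    (fun s => (hasDerivAt_expSum u v 1 s).const_add 1) (hasDerivAt_expSum u v _ 0) (hasDerivAt_expSum u v _ 0)
    (fun s => (one_add_expSum_pos u v s).ne')]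
  simp only [expSum_zero_div, mnlHessianForm, Pi.mul_apply, mul_one, sq, mul_comm, mul_left_comm]

theorem mnl_revenue_hessian_quadform_bound_general (K : ℕ)
    (r : Fin K → ℝ) (hr : ∀ i, r i ∈ Set.Icc (0:ℝ) 1) (u v : Fin K → ℝ) :
    iteratedDeriv 2 (fun s : ℝ => mnlRevenue K r (u + s • v)) 0
      ≤ 5 * ∑ i, softmaxP K u i * (v i) ^ 2 := by
  rw [iteratedDeriv_two_mnlRevenue]
  exact mnlHessianForm_le (softmaxP_nonneg K u) (sum_softmaxP_le_one K u) hr v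

/-- Quadratic-form bound on the Hessian of the expected
revenue: for rewards `r ∈ [0,1]^K` and all `u, v ∈ ℝ^K`,
`vᵀ ∇²Q̃(u) v ≤ 5 Σᵢ pᵢ(u) vᵢ²`, where the left-hand side is expressed as the
second directional derivative `d²/ds²|₀ Q̃(u + s v)`. -/
theorem mnl_revenue_hessian_quadform_bound (K : ℕ) (hK : 1 ≤ K)
    (r : Fin K → ℝ) (hr : ∀ i, r i ∈ Set.Icc (0:ℝ) 1) (u v : Fin K → ℝ) :
    iteratedDeriv 2 (fun s : ℝ => mnlRevenue K r (u + s • v)) 0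
      ≤ 5 * ∑ i, softmaxP K u i * (v i) ^ 2 :=
  mnl_revenue_hessian_quadform_bound_general K r hr u v
end
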